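/- Let H0 be a self-adjoint operator with H0 ≥ 1 and spectral projections Q^0_L = E([1,L]), let B be a symmetric operator with D(H0) ⊆ D(B) such that H = H0 + B is self-adjoint on D(H0), assume D = D^∞(H0) = D^∞(H), and set H_L = Q^0_L H Q^0_L. Then for each k ∈ ℕ there exists s ∈ ℕ such that ‖H0^{-s}(H_L − H) H0^k‖ → 0 as L → ∞, where the norm is the operator norm of the closure of the densely defined operator H0^{-s}(H_L − H)H0^k defined on D. -/

import Mathlib

/-!
Since `D = D^∞(H0) = D^∞(H)` and `H` is symmetric, `χ ↦ H0^{k+1} H χ` has a formal adjoint on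
`D`, so it is continuous for the graph topology of `H0`: `D` is a Fréchet space, hence barrelled,
and this gives `‖H0^{k+1} H χ‖ ≤ C ‖H0^m χ‖`. Take `s = m + 1`. Testing against `ψ ∈ D` and moving
`H0^{-s}` and `H0^k` across by symmetry, it suffices to bound `‖H0^k (Q_L H Q_L - H) η‖` for
`η = H0^{-s} ψ`. Split `Q_L H Q_L - H = Q_L H (Q_L - 1) + (Q_L - 1) H`; since `Q_L` commutes with
`H0`, `‖Q_L‖ ≤ 1` and `‖(Q_L - 1) x‖ ≤ L⁻¹ ‖H0 x‖`, each part is at most `C L⁻¹ ‖ψ‖`.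
-/

open scoped ComplexInnerProductSpace

namespace Paper

/-- An unbounded linear operator in a Hilbert space `𝓗`, encoded by a distinguished
domain together with a globally defined linear extension of its action. -/
structure Op (𝓗 : Type*) [NormedAddCommGroup 𝓗] [InnerProductSpace ℂ 𝓗] where
  dom : Submodule ℂ 𝓗
  op : 𝓗 →ₗ[ℂ] 𝓗

variable {𝓗 : Type*} [NormedAddCommGroup 𝓗] [InnerProductSpace ℂ 𝓗]

namespace Op

/-- `T.pw k` is the `k`-th power `T^k` of `T`, as a function. -/
def pw (T : Op 𝓗) (k : ℕ) : 𝓗 → 𝓗 := (fun x => T.op x)^[k]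

/-- The domain `D(Tⁿ)` of the `n`-th power of `T`. -/
def domPow (T : Op 𝓗) : ℕ → Set 𝓗
  | 0 => Set.univ
  | n + 1 => {x | x ∈ T.dom ∧ T.op x ∈ T.domPow n}

/-- The set of C^∞-vectors `D^∞(T) = ⋂ₙ D(Tⁿ)`. -/
def Dinf (T : Op 𝓗) : Set 𝓗 := ⋂ n : ℕ, T.domPow n

/-- `T` is symmetric. -/
def Symmetric (T : Op 𝓗) : Prop :=
  ∀ x ∈ T.dom, ∀ y ∈ T.dom, ⟪T.op x, y⟫ = ⟪x, T.op y⟫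

/-- Self-adjointness: densely defined, symmetric, and every vector in the domain of the
adjoint already belongs to the domain (on which the adjoint acts as the operator). -/
def IsSelfAdjoint (T : Op 𝓗) : Prop :=
  Dense (T.dom : Set 𝓗) ∧ T.Symmetric ∧
    ∀ y z : 𝓗, (∀ x ∈ T.dom, ⟪T.op x, y⟫ = ⟪x, z⟫) → y ∈ T.dom ∧ T.op y = z

/-- `T ≥ 1`. -/
def GeOne (T : Op 𝓗) : Prop := ∀ x ∈ T.dom, ‖x‖ ^ 2 ≤ (⟪T.op x, x⟫).re

/-- The perturbed operator `T + B`, with domain `D(T)`. -/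
def pert (T B : Op 𝓗) : Op 𝓗 := ⟨T.dom, T.op + B.op⟩

/-- The graph topology `t_T` on a subset `D`, generated by the seminorms `φ ↦ ‖Tⁿφ‖`,
i.e. the initial topology for the maps `φ ↦ Tⁿφ`. -/
def graphTopOn (T : Op 𝓗) (D : Set 𝓗) : TopologicalSpace D :=
  ⨅ n : ℕ, TopologicalSpace.induced (fun φ : D => T.pw n ↑φ) inferInstance

end Op

/-- `D0` is a core for the `k`-th power of `T`. -/
def IsCorePow (T : Op 𝓗) (k : ℕ) (D0 : Set 𝓗) : Prop :=
  D0 ⊆ T.domPow k ∧ ∀ x ∈ T.domPow k, ∃ u : ℕ → 𝓗, (∀ n, u n ∈ D0) ∧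
    Filter.Tendsto u Filter.atTop (nhds x) ∧
    Filter.Tendsto (fun n => T.pw k (u n)) Filter.atTop (nhds (T.pw k x))

/-- Membership in the O*-algebra `L†(D)`: `A` maps `D` into `D`, `D ⊆ D(A*)` and
`A* D ⊆ D` (witnessed by `Adag`). -/
def MemLdag (D : Set 𝓗) (A : 𝓗 →ₗ[ℂ] 𝓗) : Prop :=
  (∀ x ∈ D, A x ∈ D) ∧
    ∃ Adag : 𝓗 →ₗ[ℂ] 𝓗, (∀ x ∈ D, Adag x ∈ D) ∧
      ∀ x ∈ D, ∀ y ∈ D, ⟪A x, y⟫ = ⟪x, Adag y⟫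

/-- The operator norm of (the bounded extension of) `A`, computed on the unit ball of `D`. -/
noncomputable def opNormOn (D : Set 𝓗) (A : 𝓗 → 𝓗) : ℝ :=
  ⨆ φ : {ψ : 𝓗 // ψ ∈ D ∧ ‖ψ‖ ≤ 1}, ‖A ↑φ‖

/-- The class `F` of positive, bounded, continuous functions on `[0,∞)` which decrease
faster than any inverse power of `x`. -/
def IsInF (f : ℝ → ℝ) : Prop :=
  Continuous f ∧ (∀ x : ℝ, 0 ≤ x → 0 < f x) ∧
    ∀ k : ℕ, ∃ M : ℝ, ∀ x : ℝ, 0 ≤ x → x ^ k * f x ≤ M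

/-- The bounded measurable functional calculus of a self-adjoint operator `T` whose
spectrum is contained in `[a, ∞)`. -/
structure FnCalc (T : Op 𝓗) (a : ℝ) where
  Φ : (ℝ → ℝ) → (𝓗 →L[ℂ] 𝓗)
  Φ_one : Φ (fun _ => 1) = 1
  Φ_add : ∀ f g : ℝ → ℝ, Measurable f → Measurable g →
    Φ (fun t => f t + g t) = Φ f + Φ g
  Φ_mul : ∀ f g : ℝ → ℝ, Measurable f → Measurable g →
    Φ (fun t => f t * g t) = (Φ f).comp (Φ g)
  Φ_symm : ∀ (f : ℝ → ℝ) (x y : 𝓗), ⟪Φ f x, y⟫ = ⟪x, Φ f y⟫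
  Φ_norm : ∀ (f : ℝ → ℝ) (M : ℝ), (∀ t : ℝ, a ≤ t → |f t| ≤ M) →
    ∀ x : 𝓗, ‖Φ f x‖ ≤ M * ‖x‖
  Φ_supp : ∀ f : ℝ → ℝ, Measurable f → (∀ t : ℝ, a ≤ t → f t = 0) → Φ f = 0
  Φ_pos : ∀ f : ℝ → ℝ, Measurable f → (∀ t : ℝ, a ≤ t → 0 ≤ f t) →
    ∀ x : 𝓗, 0 ≤ (⟪Φ f x, x⟫).re
  Φ_dom : ∀ f : ℝ → ℝ, Measurable f → (∃ M : ℝ, ∀ t : ℝ, a ≤ t → |t * f t| ≤ M) →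
    ∀ x : 𝓗, Φ f x ∈ T.dom ∧ T.op (Φ f x) = Φ (fun t => t * f t) x
  Q_tendsto : ∀ x : 𝓗, Filter.Tendsto
    (fun L : ℝ => Φ (Set.indicator (Set.Icc a L) fun _ => (1 : ℝ)) x)
    Filter.atTop (nhds x)

/-- The spectral projection `Q_L = E([a, L])` of `T`. -/
noncomputable def FnCalc.Q {T : Op 𝓗} {a : ℝ} (c : FnCalc T a) (L : ℝ) : 𝓗 →L[ℂ] 𝓗 :=
  c.Φ (Set.indicator (Set.Icc a L) fun _ => (1 : ℝ))

/-- The seminorm `A ↦ max{‖Tᵏ A f(T)‖, ‖f(T) A Tᵏ‖}` of the quasi-uniform topology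
`τ_*` on `L†(D)`. -/
noncomputable def qseminorm {T : Op 𝓗} {a : ℝ} (c : FnCalc T a) (D : Set 𝓗)
    (f : ℝ → ℝ) (k : ℕ) (A : 𝓗 →ₗ[ℂ] 𝓗) : ℝ :=
  max (opNormOn D fun φ => T.pw k (A (c.Φ f φ)))
      (opNormOn D fun φ => c.Φ f (A (T.pw k φ)))

/-- `i[A,T] = i(A T - T A)`, as a function. -/
noncomputable def commI (A T : 𝓗 → 𝓗) : 𝓗 → 𝓗 :=
  fun φ => Complex.I • (A (T φ) - T (A φ))

/-- Iterated commutators: `itComm A B j = [A, B]_j`, with `[A,B]_0 = B` and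
`[A,B]_{j+1} = [A, [A,B]_j]`. -/
def itComm (A B : 𝓗 → 𝓗) : ℕ → (𝓗 → 𝓗)
  | 0 => B
  | j + 1 => fun φ => A (itComm A B j φ) - itComm A B j (A φ)

lemma opNormOn_nonneg {E : Type*} [NormedAddCommGroup E] (D : Set E) (A : E → E) :
    0 ≤ opNormOn D A :=
  Real.iSup_nonneg fun _ => norm_nonneg _

lemma opNormOn_le {E : Type*} [NormedAddCommGroup E] {D : Set E} {A : E → E} {r : ℝ}
    (hr : 0 ≤ r) (h : ∀ x ∈ D, ‖x‖ ≤ 1 → ‖A x‖ ≤ r) : opNormOn D A ≤ r :=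
  Real.iSup_le (fun x => h x.1 x.2.1 x.2.2) hr

namespace Op

variable {T : Op 𝓗}

lemma pw_eq_pow (T : Op 𝓗) (n : ℕ) : T.pw n = ⇑(T.op ^ n) :=
  (Module.End.coe_pow T.op n).symm

lemma pw_succ (T : Op 𝓗) (n : ℕ) (x : 𝓗) : T.pw (n + 1) x = T.pw n (T.op x) :=
  Function.iterate_succ_apply _ _ _

lemma pw_succ' (T : Op 𝓗) (n : ℕ) (x : 𝓗) : T.pw (n + 1) x = T.op (T.pw n x) :=
  Function.iterate_succ_apply' _ _ _

lemma mem_Dinf {x : 𝓗} : x ∈ T.Dinf ↔ ∀ n, x ∈ T.domPow n := Set.mem_iInter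

lemma mem_dom_of_mem_Dinf {x : 𝓗} (hx : x ∈ T.Dinf) : x ∈ T.dom :=
  (mem_Dinf.1 hx 1).1

lemma op_mem_Dinf {x : 𝓗} (hx : x ∈ T.Dinf) : T.op x ∈ T.Dinf :=
  mem_Dinf.2 fun n => (mem_Dinf.1 hx (n + 1)).2

lemma pw_mem_Dinf {x : 𝓗} (hx : x ∈ T.Dinf) (n : ℕ) : T.pw n x ∈ T.Dinf := by
  induction n with
  | zero => exact hx
  | succ n ih => rw [pw_succ']; exact op_mem_Dinf ih

lemma op_mem_Dinf_of_Dinf_eq {A : Op 𝓗} (hA : A.Dinf = T.Dinf) {x : 𝓗} (hx : x ∈ T.Dinf) :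
    A.op x ∈ T.Dinf :=
  hA ▸ op_mem_Dinf (hA ▸ hx)

lemma mem_dom_of_Dinf_eq {A : Op 𝓗} (hA : A.Dinf = T.Dinf) {x : 𝓗} (hx : x ∈ T.Dinf) :
    x ∈ A.dom :=
  mem_dom_of_mem_Dinf (hA ▸ hx)

lemma sub_mem_domPow : ∀ {n : ℕ} {x y : 𝓗},
    x ∈ T.domPow n → y ∈ T.domPow n → x - y ∈ T.domPow n
  | 0, _, _, _, _ => trivial
  | _ + 1, _, _, hx, hy =>
    ⟨sub_mem hx.1 hy.1, by rw [map_sub]; exact sub_mem_domPow hx.2 hy.2⟩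

lemma sub_mem_Dinf {x y : 𝓗} (hx : x ∈ T.Dinf) (hy : y ∈ T.Dinf) : x - y ∈ T.Dinf :=
  mem_Dinf.2 fun n => sub_mem_domPow (mem_Dinf.1 hx n) (mem_Dinf.1 hy n)

lemma IsSelfAdjoint.symmetric (hT : T.IsSelfAdjoint) : T.Symmetric := hT.2.1

lemma Symmetric.inner_pw (hT : T.Symmetric) (n : ℕ) {x y : 𝓗} (hx : x ∈ T.Dinf)
    (hy : y ∈ T.Dinf) : ⟪T.pw n x, y⟫ = ⟪x, T.pw n y⟫ := by
  induction n generalizing y with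
  | zero => rfl
  | succ n ih =>
    rw [pw_succ', hT _ (mem_dom_of_mem_Dinf (pw_mem_Dinf hx n)) _ (mem_dom_of_mem_Dinf hy),
      ih (op_mem_Dinf hy), ← pw_succ]

lemma GeOne.norm_le_norm_op (hT : T.GeOne) {x : 𝓗} (hx : x ∈ T.dom) : ‖x‖ ≤ ‖T.op x‖ := by
  rcases (norm_nonneg x).eq_or_lt with h0 | hpos
  · rw [← h0]; positivity
  refine le_of_mul_le_mul_right ?_ hpos
  calc ‖x‖ * ‖x‖ = ‖x‖ ^ 2 := by ring
    _ ≤ (⟪T.op x, x⟫).re := hT x hx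
    _ ≤ ‖⟪T.op x, x⟫‖ := Complex.re_le_norm _
    _ ≤ ‖T.op x‖ * ‖x‖ := norm_inner_le_norm _ _

lemma GeOne.monotone_norm_pw (hT : T.GeOne) {x : 𝓗} (hx : x ∈ T.Dinf) :
    Monotone fun n => ‖T.pw n x‖ :=
  monotone_nat_of_le_succ fun n => by
    rw [pw_succ' T n x]; exact hT.norm_le_norm_op (mem_dom_of_mem_Dinf (pw_mem_Dinf hx n))

lemma IsSelfAdjoint.isClosed_graph (hT : T.IsSelfAdjoint) :
    IsClosed {p : 𝓗 × 𝓗 | p.1 ∈ T.dom ∧ T.op p.1 = p.2} := by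
  have : {p : 𝓗 × 𝓗 | p.1 ∈ T.dom ∧ T.op p.1 = p.2} =
      ⋂ u ∈ T.dom, {p : 𝓗 × 𝓗 | ⟪T.op u, p.1⟫ = ⟪u, p.2⟫} := by
    ext p
    simp only [Set.mem_ofPred_eq, Set.mem_iInter]
    refine ⟨?_, hT.2.2 p.1 p.2⟩
    rintro ⟨hp, hTp⟩ u hu
    rw [← hTp]
    exact hT.symmetric u hu p.1 hp
  rw [this]
  exact isClosed_biInter fun u _ => isClosed_eq (by fun_prop) (by fun_prop)

/-- The sequences `(Tⁿ x)ₙ`, `x ∈ D^∞(T)`. With the product topology of `ℕ → 𝓗` this is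
`D^∞(T)` with the graph topology of `T`, and it is closed when `T` is. -/
def orbits (T : Op 𝓗) : Submodule ℂ (ℕ → 𝓗) where
  carrier := {x | ∀ n, x n ∈ T.dom ∧ T.op (x n) = x (n + 1)}
  add_mem' hx hy n := ⟨add_mem (hx n).1 (hy n).1, by simp [(hx n).2, (hy n).2]⟩
  zero_mem' n := ⟨zero_mem _, map_zero _⟩
  smul_mem' c x hx n := ⟨Submodule.smul_mem _ c (hx n).1, by simp [(hx n).2]⟩

lemma pw_mem_orbits {x : 𝓗} (hx : x ∈ T.Dinf) : (fun n => T.pw n x) ∈ T.orbits := fun n =>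
  ⟨mem_dom_of_mem_Dinf (pw_mem_Dinf hx n), (pw_succ' T n x).symm⟩

lemma zero_mem_Dinf_of_mem_orbits {x : ℕ → 𝓗} (hx : x ∈ T.orbits) : x 0 ∈ T.Dinf := by
  refine mem_Dinf.2 fun n => ?_
  induction n generalizing x with
  | zero => trivial
  | succ n ih =>
    exact ⟨(hx 0).1, (hx 0).2 ▸ ih (x := fun j => x (j + 1)) fun j => hx (j + 1)⟩

lemma IsSelfAdjoint.isClosed_orbits (hT : T.IsSelfAdjoint) :
    IsClosed (T.orbits : Set (ℕ → 𝓗)) := by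
  have : (T.orbits : Set (ℕ → 𝓗)) =
      ⋂ n, (fun x : ℕ → 𝓗 => (x n, x (n + 1))) ⁻¹' {p | p.1 ∈ T.dom ∧ T.op p.1 = p.2} := by
    ext x; simp [orbits]
  rw [this]
  exact isClosed_iInter fun n => hT.isClosed_graph.preimage (by fun_prop)

variable {R : 𝓗 →L[ℂ] 𝓗}

lemma pw_pow_apply_of_rightInverse (hR : ∀ x, T.op (R x) = x) (n : ℕ) (x : 𝓗) :
    T.pw n ((R ^ n) x) = x := by
  induction n generalizing x with
  | zero => rfl
  | succ n ih => rw [pw_succ', pow_succ, mul_apply_eq_comp, ih, hR]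

lemma pow_apply_mem_Dinf_of_rightInverse (hR_mem : ∀ x, R x ∈ T.dom) (hR : ∀ x, T.op (R x) = x)
    (n : ℕ) {x : 𝓗} (hx : x ∈ T.Dinf) : (R ^ n) x ∈ T.Dinf := by
  induction n with
  | zero => exact hx
  | succ n ih =>
    rw [pow_succ', mul_apply_eq_comp]
    refine mem_Dinf.2 fun j => ?_
    cases j with
    | zero => trivial
    | succ j => exact ⟨hR_mem _, (hR _).symm ▸ mem_Dinf.1 ih j⟩

lemma Symmetric.inner_rightInverse (hT : T.Symmetric) (hR_mem : ∀ x, R x ∈ T.dom)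
    (hR : ∀ x, T.op (R x) = x) (x y : 𝓗) : ⟪R x, y⟫ = ⟪x, R y⟫ := by
  conv_lhs => rw [← hR y]
  rw [← hT _ (hR_mem x) _ (hR_mem y), hR]

lemma Symmetric.inner_pow_rightInverse (hT : T.Symmetric) (hR_mem : ∀ x, R x ∈ T.dom)
    (hR : ∀ x, T.op (R x) = x) (n : ℕ) (x y : 𝓗) : ⟪(R ^ n) x, y⟫ = ⟪x, (R ^ n) y⟫ := by
  induction n generalizing x with
  | zero => rfl
  | succ n ih =>
    calc ⟪(R ^ (n + 1)) x, y⟫ = ⟪(R ^ n) (R x), y⟫ := by rw [pow_succ, mul_apply_eq_comp]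
      _ = ⟪x, R ((R ^ n) y)⟫ := by rw [ih, hT.inner_rightInverse hR_mem hR]
      _ = ⟪x, (R ^ (n + 1)) y⟫ := by rw [pow_succ', mul_apply_eq_comp]

end Op

def BddFrom (a : ℝ) (f : ℝ → ℝ) : Prop := ∃ M, ∀ t, a ≤ t → |f t| ≤ M

lemma abs_pow_mul_indicator_Icc_le {a L t : ℝ} (n : ℕ) :
    |t ^ n * Set.indicator (Set.Icc a L) (fun _ => (1 : ℝ)) t| ≤ max |a| |L| ^ n := by
  by_cases ht : t ∈ Set.Icc a L
  · rw [Set.indicator_of_mem ht, mul_one, abs_pow]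
    exact pow_le_pow_left₀ (abs_nonneg t) (abs_le_max_abs_abs ht.1 ht.2) n
  · rw [Set.indicator_of_notMem ht, mul_zero, abs_zero]
    positivity

lemma bddFrom_pow_mul_indicator_Icc (b : ℝ) {a L : ℝ} (n : ℕ) :
    BddFrom b fun t => t ^ n * Set.indicator (Set.Icc a L) (fun _ => (1 : ℝ)) t := by
  exact ⟨_, fun _ _ => abs_pow_mul_indicator_Icc_le n⟩

lemma bddFrom_indicator_Icc (b : ℝ) {a L : ℝ} :
    BddFrom b (Set.indicator (Set.Icc a L) fun _ => (1 : ℝ)) := by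
  simpa using bddFrom_pow_mul_indicator_Icc b 0

lemma bddFrom_mul_mul_inv {a : ℝ} (ha : 0 < a) {f : ℝ → ℝ} (hb : BddFrom a f) :
    BddFrom a fun t => t * (f t * t⁻¹) := by
  obtain ⟨M, hM⟩ := hb
  refine ⟨M, fun t ht => ?_⟩
  show |t * (f t * t⁻¹)| ≤ M
  rw [mul_comm, mul_assoc, inv_mul_cancel₀ (by linarith), mul_one]
  exact hM t ht

lemma abs_indicator_Icc_sub_one_mul_inv_le {a L t : ℝ} (hL : 0 < L) (ht : a ≤ t)
    (ht0 : 0 < t) : |(Set.indicator (Set.Icc a L) (fun _ => (1 : ℝ)) t - 1) * t⁻¹| ≤ L⁻¹ := by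
  by_cases htL : t ≤ L
  · rw [Set.indicator_of_mem (Set.mem_Icc.2 ⟨ht, htL⟩)]
    simp [hL.le]
  · rw [Set.indicator_of_notMem fun h => htL h.2, zero_sub, neg_one_mul, abs_neg,
      abs_of_pos (inv_pos.2 ht0)]
    exact inv_anti₀ hL (not_le.1 htL).le

lemma measurable_indicator_Icc (a L : ℝ) :
    Measurable (Set.indicator (Set.Icc a L) fun _ => (1 : ℝ)) :=
  measurable_const.indicator measurableSet_Icc

namespace FnCalc

variable {T A : Op 𝓗} {a : ℝ} (c : FnCalc T a)

lemma Φ_congr {f g : ℝ → ℝ} (hf : Measurable f) (hg : Measurable g)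
    (h : ∀ t, a ≤ t → f t = g t) : c.Φ f = c.Φ g := by
  have := c.Φ_add g (fun t => f t - g t) hg (hf.sub hg)
  rw [show (fun t => g t + (f t - g t)) = f by simp] at this
  rw [this, c.Φ_supp (fun t => f t - g t) (hf.sub hg) fun t ht => sub_eq_zero.2 (h t ht),
    add_zero]

lemma Φ_mul_apply {f g : ℝ → ℝ} (hf : Measurable f) (hg : Measurable g) (x : 𝓗) :
    c.Φ (fun t => f t * g t) x = c.Φ f (c.Φ g x) := by
  rw [c.Φ_mul f g hf hg]; rfl

lemma Φ_sub_one_apply {f : ℝ → ℝ} (hf : Measurable f) (x : 𝓗) :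
    c.Φ (fun t => f t - 1) x = c.Φ f x - x := by
  have := c.Φ_add (fun t => f t - 1) (fun _ => 1) (hf.sub measurable_const) measurable_const
  simp only [sub_add_cancel, c.Φ_one] at this
  rw [this]; simp

lemma Φ_mem_Dinf {f : ℝ → ℝ} (hf : Measurable f)
    (hb : ∀ n : ℕ, BddFrom a fun t => t ^ n * f t) (x : 𝓗) : c.Φ f x ∈ T.Dinf := by
  refine Op.mem_Dinf.2 fun n => ?_
  induction n generalizing f with
  | zero => trivial
  | succ n ih =>
    have hb1 : BddFrom a fun t => t * f t := by simpa using hb 1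
    refine ⟨(c.Φ_dom f hf hb1 x).1, (c.Φ_dom f hf hb1 x).2 ▸ ih (measurable_id.mul hf) ?_⟩
    intro j
    simpa only [pow_succ, mul_assoc] using hb (j + 1)

lemma Φ_inv_op (ha : 0 < a) (hT : T.Symmetric) {x : 𝓗} (hx : x ∈ T.dom) :
    c.Φ (fun t => t⁻¹) (T.op x) = x := by
  have hb : BddFrom a fun t => t * t⁻¹ := by
    simpa using bddFrom_mul_mul_inv ha (f := fun _ => 1) ⟨1, fun _ _ => by simp⟩
  refine ext_inner_right ℂ fun y => ?_
  rw [c.Φ_symm, hT x hx _ (c.Φ_dom _ measurable_inv hb y).1, (c.Φ_dom _ measurable_inv hb y).2,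
    c.Φ_congr (f := fun t => t * t⁻¹) (g := fun _ => 1) (measurable_id.mul measurable_inv)
      measurable_const fun t ht => mul_inv_cancel₀ (by linarith), c.Φ_one]
  rfl

lemma op_Φ_apply (ha : 0 < a) (hT : T.Symmetric) {f : ℝ → ℝ} (hf : Measurable f)
    (hb : BddFrom a f) {x : 𝓗} (hx : x ∈ T.dom) :
    c.Φ f x ∈ T.dom ∧ T.op (c.Φ f x) = c.Φ f (T.op x) := by
  have hfx : c.Φ f x = c.Φ (fun t => f t * t⁻¹) (T.op x) := by
    rw [c.Φ_mul_apply hf measurable_inv, c.Φ_inv_op ha hT hx]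
  have hdom := c.Φ_dom (fun t => f t * t⁻¹) (hf.mul measurable_inv)
    (bddFrom_mul_mul_inv ha hb) (T.op x)
  refine ⟨hfx ▸ hdom.1, ?_⟩
  rw [hfx, hdom.2, c.Φ_congr (f := fun t => t * (f t * t⁻¹))
    (measurable_id.mul (hf.mul measurable_inv)) hf]
  intro t ht
  rw [mul_comm, mul_assoc, inv_mul_cancel₀ (by linarith), mul_one]

lemma pw_Φ_apply (ha : 0 < a) (hT : T.Symmetric) {f : ℝ → ℝ} (hf : Measurable f)
    (hb : BddFrom a f) (n : ℕ) {x : 𝓗} (hx : x ∈ T.Dinf) :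
    T.pw n (c.Φ f x) = c.Φ f (T.pw n x) := by
  induction n generalizing x with
  | zero => rfl
  | succ n ih =>
    rw [Op.pw_succ, Op.pw_succ, (c.op_Φ_apply ha hT hf hb (Op.mem_dom_of_mem_Dinf hx)).2,
      ih (Op.op_mem_Dinf hx)]

lemma Q_symm (L : ℝ) (x y : 𝓗) : ⟪c.Q L x, y⟫ = ⟪x, c.Q L y⟫ := c.Φ_symm _ x y

lemma norm_Q_apply_le (L : ℝ) (x : 𝓗) : ‖c.Q L x‖ ≤ ‖x‖ := by
  have := c.Φ_norm _ 1 (fun t _ => by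
    simpa using abs_pow_mul_indicator_Icc_le (a := a) (L := L) (t := t) 0) x
  rwa [one_mul] at this

lemma Q_mem_Dinf (L : ℝ) (x : 𝓗) : c.Q L x ∈ T.Dinf :=
  c.Φ_mem_Dinf (measurable_indicator_Icc a L) (bddFrom_pow_mul_indicator_Icc a) x

lemma norm_Q_sub_le (ha : 0 < a) (hT : T.Symmetric) {L : ℝ} (hL : 0 < L) {x : 𝓗}
    (hx : x ∈ T.dom) : ‖c.Q L x - x‖ ≤ L⁻¹ * ‖T.op x‖ := by
  have hQx : c.Q L x - x =
      c.Φ (fun t => (Set.indicator (Set.Icc a L) (fun _ => 1) t - 1) * t⁻¹) (T.op x) := by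
    rw [c.Φ_mul_apply (f := fun t => Set.indicator (Set.Icc a L) (fun _ => (1 : ℝ)) t - 1)
      ((measurable_indicator_Icc a L).sub measurable_const) measurable_inv, c.Φ_inv_op ha hT hx,
      c.Φ_sub_one_apply (measurable_indicator_Icc a L), FnCalc.Q]
  rw [hQx]
  exact c.Φ_norm _ _ (fun t ht =>
    abs_indicator_Icc_sub_one_mul_inv_le hL ht (ha.trans_le ht)) _

lemma norm_pw_Q_le (ha : 0 < a) (hT : T.Symmetric) (L : ℝ) (n : ℕ) {x : 𝓗}
    (hx : x ∈ T.Dinf) : ‖T.pw n (c.Q L x)‖ ≤ ‖T.pw n x‖ := by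
  rw [FnCalc.Q, c.pw_Φ_apply ha hT (measurable_indicator_Icc a L) (bddFrom_indicator_Icc a) n hx]
  exact c.norm_Q_apply_le L _

lemma norm_pw_Q_sub_le (ha : 0 < a) (hT : T.Symmetric) {L : ℝ} (hL : 0 < L) (n : ℕ) {x : 𝓗}
    (hx : x ∈ T.Dinf) : ‖T.pw n (c.Q L x - x)‖ ≤ L⁻¹ * ‖T.pw (n + 1) x‖ := by
  rw [T.pw_eq_pow, map_sub, ← T.pw_eq_pow, FnCalc.Q,
    c.pw_Φ_apply ha hT (measurable_indicator_Icc a L) (bddFrom_indicator_Icc a) n hx, T.pw_succ']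
  exact c.norm_Q_sub_le ha hT hL (Op.mem_dom_of_mem_Dinf (Op.pw_mem_Dinf hx n))

lemma inner_QAQ_sub (hA : A.Symmetric) (hAD : A.Dinf = T.Dinf) (L : ℝ) {u η : 𝓗}
    (hu : u ∈ T.Dinf) (hη : η ∈ T.Dinf) :
    ⟪c.Q L (A.op (c.Q L u)) - A.op u, η⟫ = ⟪u, c.Q L (A.op (c.Q L η)) - A.op η⟫ := by
  have hdom := fun {x} (hx : x ∈ T.Dinf) => Op.mem_dom_of_Dinf_eq hAD hx
  rw [inner_sub_left, inner_sub_right, c.Q_symm, hA _ (hdom (c.Q_mem_Dinf L u)) _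
    (hdom (c.Q_mem_Dinf L η)), c.Q_symm, hA _ (hdom hu) _ (hdom hη)]

lemma norm_pw_QAQ_sub_le (ha : 0 < a) (hT : T.Symmetric) (hge : T.GeOne)
    (hAD : A.Dinf = T.Dinf) {k m : ℕ} {C : ℝ} (hC : 0 ≤ C)
    (hbound : ∀ χ ∈ T.Dinf, ‖T.pw (k + 1) (A.op χ)‖ ≤ C * ‖T.pw m χ‖)
    {L : ℝ} (hL : 0 < L) {η : 𝓗} (hη : η ∈ T.Dinf) :
    ‖T.pw k (c.Q L (A.op (c.Q L η)) - A.op η)‖ ≤ 2 * C * L⁻¹ * ‖T.pw (m + 1) η‖ := by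
  have hQη : c.Q L η - η ∈ T.Dinf := Op.sub_mem_Dinf (c.Q_mem_Dinf L η) hη
  have hAQη := Op.op_mem_Dinf_of_Dinf_eq hAD hQη
  have hAη := Op.op_mem_Dinf_of_Dinf_eq hAD hη
  have h₁ : ‖T.pw k (c.Q L (A.op (c.Q L η - η)))‖ ≤ C * L⁻¹ * ‖T.pw (m + 1) η‖ :=
    calc ‖T.pw k (c.Q L (A.op (c.Q L η - η)))‖
        ≤ ‖T.pw (k + 1) (A.op (c.Q L η - η))‖ :=
          (c.norm_pw_Q_le ha hT L k hAQη).trans (hge.monotone_norm_pw hAQη k.le_succ)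
      _ ≤ C * ‖T.pw m (c.Q L η - η)‖ := hbound _ hQη
      _ ≤ C * (L⁻¹ * ‖T.pw (m + 1) η‖) :=
          mul_le_mul_of_nonneg_left (c.norm_pw_Q_sub_le ha hT hL m hη) hC
      _ = C * L⁻¹ * ‖T.pw (m + 1) η‖ := by ring
  have h₂ : ‖T.pw k (c.Q L (A.op η) - A.op η)‖ ≤ C * L⁻¹ * ‖T.pw (m + 1) η‖ :=
    calc ‖T.pw k (c.Q L (A.op η) - A.op η)‖ ≤ L⁻¹ * ‖T.pw (k + 1) (A.op η)‖ :=
          c.norm_pw_Q_sub_le ha hT hL k hAη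
      _ ≤ L⁻¹ * (C * ‖T.pw (m + 1) η‖) :=
          mul_le_mul_of_nonneg_left ((hbound η hη).trans (mul_le_mul_of_nonneg_left
            (hge.monotone_norm_pw hη m.le_succ) hC)) (inv_nonneg.2 hL.le)
      _ = C * L⁻¹ * ‖T.pw (m + 1) η‖ := by ring
  have hsplit : c.Q L (A.op (c.Q L η)) - A.op η =
      c.Q L (A.op (c.Q L η - η)) + (c.Q L (A.op η) - A.op η) := by
    rw [map_sub, map_sub]; abel
  rw [hsplit, T.pw_eq_pow, map_add, ← T.pw_eq_pow]
  exact (norm_add_le _ _).trans (by linarith)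

end FnCalc

lemma FnCalc.norm_le_of_forall_inner_le {T : Op 𝓗} {a : ℝ} (c : FnCalc T a) {v : 𝓗} {r : ℝ}
    (h : ∀ ψ ∈ T.Dinf, ‖ψ‖ ≤ 1 → ‖⟪v, ψ⟫‖ ≤ r) : ‖v‖ ≤ r := by
  set ψ : 𝓗 := ((‖v‖⁻¹ : ℝ) : ℂ) • v
  have hψ : ‖ψ‖ ≤ 1 := by
    rw [norm_smul, Complex.norm_real, norm_inv, norm_norm]
    exact inv_mul_le_one_of_le₀ le_rfl (norm_nonneg v)
  have hvψ : ‖⟪v, ψ⟫‖ = ‖v‖ := by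
    rw [inner_smul_right, inner_self_eq_norm_sq_to_K]
    rcases eq_or_ne ‖v‖ 0 with h0 | h0
    · simp [h0]
    · simp only [Complex.norm_mul, Complex.norm_real, norm_inv, norm_norm, norm_pow]
      field_simp
      simp
  have hlim : Filter.Tendsto (fun L => ‖⟪v, c.Q L ψ⟫‖) Filter.atTop (nhds ‖⟪v, ψ⟫‖) :=
    (tendsto_const_nhds.inner (c.Q_tendsto ψ)).norm
  rw [← hvψ]
  exact le_of_tendsto hlim (Filter.Eventually.of_forall fun L =>
    h _ (c.Q_mem_Dinf L ψ) ((c.norm_Q_apply_le L ψ).trans hψ))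

section GraphBound

variable [CompleteSpace 𝓗]

open Op in
/-- On the Fréchet space `H0.orbits`, `x ↦ ‖T (x 0)‖` is a supremum of continuous seminorms
thanks to the formal adjoint `T'`, hence continuous because Fréchet spaces are barrelled. -/
theorem exists_norm_le_mul_norm_pw {H0 : Op 𝓗} {a : ℝ} (hsa : H0.IsSelfAdjoint)
    (hge : H0.GeOne) (c : FnCalc H0 a) (T : 𝓗 →ₗ[ℂ] 𝓗) (T' : 𝓗 → 𝓗)
    (hT : ∀ χ ∈ H0.Dinf, ∀ ω ∈ H0.Dinf, ⟪T χ, ω⟫ = ⟪χ, T' ω⟫) :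
    ∃ (m : ℕ) (C : ℝ), 0 ≤ C ∧ ∀ χ ∈ H0.Dinf, ‖T χ‖ ≤ C * ‖H0.pw m χ‖ := by
  have : TopologicalSpace.IsCompletelyPseudoMetrizableSpace H0.orbits :=
    hsa.isClosed_orbits.isCompletelyPseudoMetrizableSpace
  let P : Seminorm ℂ H0.orbits :=
    (normSeminorm ℂ 𝓗).comp (T ∘ₗ LinearMap.proj 0 ∘ₗ H0.orbits.subtype)
  have hP : ∀ x : H0.orbits, P x = ‖T ((x : ℕ → 𝓗) 0)‖ := fun _ => rfl
  have hPle : ∀ (x : H0.orbits) (r : ℝ), P x ≤ r ↔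
      ∀ ω ∈ {ω | ω ∈ H0.Dinf ∧ ‖ω‖ ≤ 1}, ‖⟪(x : ℕ → 𝓗) 0, T' ω⟫‖ ≤ r := by
    intro x r
    have hx0 := zero_mem_Dinf_of_mem_orbits x.2
    rw [hP]
    constructor
    · rintro hr ω ⟨hω, hω1⟩
      rw [← hT _ hx0 ω hω]
      calc ‖⟪T ((x : ℕ → 𝓗) 0), ω⟫‖ ≤ ‖T ((x : ℕ → 𝓗) 0)‖ * ‖ω‖ := norm_inner_le_norm _ _
        _ ≤ ‖T ((x : ℕ → 𝓗) 0)‖ := mul_le_of_le_one_right (norm_nonneg _) hω1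
        _ ≤ r := hr
    · intro h
      refine c.norm_le_of_forall_inner_le fun ω hω hω1 => ?_
      rw [hT _ hx0 ω hω]
      exact h ω ⟨hω, hω1⟩
  have hlsc : LowerSemicontinuous P := by
    refine lowerSemicontinuous_iff_isClosed_preimage.2 fun r => ?_
    have : P ⁻¹' Set.Iic r = ⋂ ω ∈ {ω | ω ∈ H0.Dinf ∧ ‖ω‖ ≤ 1},
        {x : H0.orbits | ‖⟪(x : ℕ → 𝓗) 0, T' ω⟫‖ ≤ r} := by
      ext x
      simp only [Set.mem_preimage, Set.mem_Iic, Set.mem_iInter]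
      exact hPle x r
    rw [this]
    exact isClosed_biInter fun ω _ => isClosed_le
      ((continuous_apply 0).comp continuous_subtype_val |>.inner continuous_const).norm
      continuous_const
  have hS := Topology.IsInducing.subtypeVal.withSeminorms (f := H0.orbits.subtype)
    (withSeminorms_pi fun _ : ℕ => norm_withSeminorms ℂ 𝓗)
  obtain ⟨s, C, -, hPC⟩ :=
    Seminorm.bound_of_continuous hS P (P.continuous_of_lowerSemicontinuous hlsc)
  refine ⟨s.sup Sigma.fst, C, C.2, fun χ hχ => ?_⟩
  have hle := hPC ⟨_, pw_mem_orbits hχ⟩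
  rw [smul_apply] at hle
  refine hle.trans (mul_le_mul_of_nonneg_left ?_ C.2)
  refine Seminorm.finset_sup_apply_le (norm_nonneg _) fun i hi => ?_
  show ‖H0.pw i.1 χ‖ ≤ _
  exact hge.monotone_norm_pw hχ (Finset.le_sup (f := Sigma.fst) hi)

theorem exists_norm_pw_op_le {H0 A : Op 𝓗} {a : ℝ} (hsa : H0.IsSelfAdjoint) (hge : H0.GeOne)
    (c : FnCalc H0 a) (hA : A.Symmetric) (hAD : A.Dinf = H0.Dinf) (p : ℕ) :
    ∃ (m : ℕ) (C : ℝ), 0 ≤ C ∧ ∀ χ ∈ H0.Dinf, ‖H0.pw p (A.op χ)‖ ≤ C * ‖H0.pw m χ‖ := by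
  simpa only [LinearMap.comp_apply, ← H0.pw_eq_pow] using
    exists_norm_le_mul_norm_pw hsa hge c ((H0.op ^ p) ∘ₗ A.op) (fun ω => A.op (H0.pw p ω))
      fun χ hχ ω hω => by
        rw [LinearMap.comp_apply, ← H0.pw_eq_pow, hsa.symmetric.inner_pw p
          (Op.op_mem_Dinf_of_Dinf_eq hAD hχ) hω, hA χ (Op.mem_dom_of_Dinf_eq hAD hχ) _
            (Op.mem_dom_of_Dinf_eq hAD (Op.pw_mem_Dinf hω p))]

end GraphBound

variable {𝓗 : Type*} [NormedAddCommGroup 𝓗] [InnerProductSpace ℂ 𝓗] [CompleteSpace 𝓗]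

theorem stmt14_general (H0 B : Op 𝓗) (hsa0 : H0.IsSelfAdjoint) (hge : H0.GeOne)
    (hsaH : (H0.pert B).IsSelfAdjoint)
    (S0 : FnCalc H0 1)
    -- `Hinv` is the bounded inverse `H0⁻¹`
    (Hinv : 𝓗 →L[ℂ] 𝓗)
    (hinv_mem : ∀ x : 𝓗, Hinv x ∈ H0.dom)
    (hinv_right : ∀ x : 𝓗, H0.op (Hinv x) = x)
    (D : Set 𝓗) (hD0 : D = H0.Dinf) (hDH : D = (H0.pert B).Dinf) :
    ∀ k : ℕ, ∃ s : ℕ,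
      Filter.Tendsto (fun L : ℝ => opNormOn D (fun φ =>
          (Hinv ^ s) (S0.Q L ((H0.pert B).op (S0.Q L (H0.pw k φ)))
            - (H0.pert B).op (H0.pw k φ))))
        Filter.atTop (nhds 0) := by
  subst hD0
  intro k
  have hsym := hsa0.symmetric
  obtain ⟨m, C, hC, hbound⟩ :=
    exists_norm_pw_op_le hsa0 hge S0 hsaH.symmetric hDH.symm (k + 1)
  refine ⟨m + 1, squeeze_zero' (Filter.Eventually.of_forall fun L => opNormOn_nonneg _ _) ?_
    (by simpa only [mul_zero] using tendsto_inv_atTop_zero.const_mul (2 * C))⟩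
  filter_upwards [Filter.eventually_gt_atTop 0] with L hL
  refine opNormOn_le (by positivity) fun φ hφ hφ1 =>
    S0.norm_le_of_forall_inner_le fun ψ hψ hψ1 => ?_
  -- `H0^{-s}` and `Q_L H Q_L - H` are symmetric, so `H0^k` and `H0^{-s}` move onto `ψ`.
  set η := (Hinv ^ (m + 1)) ψ
  have hη : η ∈ H0.Dinf := Op.pow_apply_mem_Dinf_of_rightInverse hinv_mem hinv_right _ hψ
  rw [hsym.inner_pow_rightInverse hinv_mem hinv_right,
    S0.inner_QAQ_sub hsaH.symmetric hDH.symm L (Op.pw_mem_Dinf hφ k) hη,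
    hsym.inner_pw k hφ
      (Op.sub_mem_Dinf (S0.Q_mem_Dinf L _) (Op.op_mem_Dinf_of_Dinf_eq hDH.symm hη))]
  calc _ ≤ ‖φ‖ * ‖H0.pw k (S0.Q L ((H0.pert B).op (S0.Q L η)) - (H0.pert B).op η)‖ :=
        norm_inner_le_norm _ _
    _ ≤ 1 * (2 * C * L⁻¹ * ‖H0.pw (m + 1) η‖) :=
        mul_le_mul hφ1 (S0.norm_pw_QAQ_sub_le one_pos hsym hge hDH.symm hC hbound hL hη)
          (norm_nonneg _) zero_le_one
    _ = 2 * C * L⁻¹ * ‖ψ‖ := by rw [one_mul, Op.pw_pow_apply_of_rightInverse hinv_right]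
    _ ≤ 2 * C * L⁻¹ := mul_le_of_le_one_right (by positivity) hψ1

/-- (Lemma 59.1) With `H_L = Q⁰_L H Q⁰_L`, for each `k ∈ ℕ` there
exists `s ∈ ℕ` such that `‖H0^{-s} (H_L - H) H0^k‖ → 0` as `L → ∞`. -/
theorem stmt14 (H0 B : Op 𝓗) (hsa0 : H0.IsSelfAdjoint) (hge : H0.GeOne)
    (hBsymm : B.Symmetric) (hdomB : (H0.dom : Set 𝓗) ⊆ B.dom)
    (hsaH : (H0.pert B).IsSelfAdjoint)
    (S0 : FnCalc H0 1)
    -- `Hinv` is the bounded inverse `H0⁻¹`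
    (Hinv : 𝓗 →L[ℂ] 𝓗)
    (hinv_mem : ∀ x : 𝓗, Hinv x ∈ H0.dom)
    (hinv_right : ∀ x : 𝓗, H0.op (Hinv x) = x)
    (hinv_left : ∀ x ∈ H0.dom, Hinv (H0.op x) = x)
    (D : Set 𝓗) (hD0 : D = H0.Dinf) (hDH : D = (H0.pert B).Dinf) :
    ∀ k : ℕ, ∃ s : ℕ,
      Filter.Tendsto (fun L : ℝ => opNormOn D (fun φ =>
          (Hinv ^ s) (S0.Q L ((H0.pert B).op (S0.Q L (H0.pw k φ)))
            - (H0.pert B).op (H0.pw k φ))))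
        Filter.atTop (nhds 0) :=
  stmt14_general H0 B hsa0 hge hsaH S0 Hinv hinv_mem hinv_right D hD0 hDH

end Paper
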